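/- arXiv:2004.04231 — 11 statements merged into one kernel-verified Lean document; each statement's English description precedes it below -/
import Mathlib

section
/- Sequence criterion for star membership: Let X be a metric space with basepoint x₀, and let X̄ be a compact, Hausdorff, first-countable bordification of X (X sits inside X̄ as a dense open subset), with boundary ∂X = X̄ ∖ X. Then for boundary points ξ, η ∈ ∂X, one has η ∈ S(ξ) (the star of ξ with basepoint x₀) if and only if for every open neighborhood U of η in X̄ there exist a constant C ≥ 0 and sequences (x_n), (y_n) of points of X such that x_n → ξ in X̄, y_n ∈ U for all sufficiently large n, and dist(y_n, x_n) ≤ dist(y_n, x₀) + C for all n. -/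
/-!
A point `p` of `⋂_V closure (H(V ∩ X, C))` near `η` yields, for each small open `V ∋ ξ`, points
`y ∈ X` near `p` and `x ∈ V ∩ X` with `dist y x ≤ dist y x₀ + C + 1`; running `V` through a
countable neighbourhood basis of `ξ` gives the sequences. Conversely, a cluster point `z` of
`(y_n)` lies in every `closure (H(V ∩ X, C))`, since `y_n ∈ H(V ∩ X, C)` as soon as `x_n ∈ V`;
regularity of the compact Hausdorff space `X̄` lets us first shrink `U` to a closed
neighbourhood of `η`, so that `z` stays in `U`.
-/

open Filter Topology Metric Set

/-- The halfspace `H(W, C)` based at `x₀`: points `z` with `infDist z W ≤ dist z x₀ + C`. -/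
def halfspace {X : Type*} [MetricSpace X] (x₀ : X) (W : Set X) (C : ℝ) : Set X :=
  {z | Metric.infDist z W ≤ dist z x₀ + C}

/-- The star of a boundary point `ξ` in a bordification `e : X → Y`, with basepoint `x₀`:
`S(ξ) = closure (⋃_{C ≥ 0} ⋂_{V open ∋ ξ} closure (H(V ∩ X, C)))`, closures in `Y`. -/
def star {X : Type*} [MetricSpace X] {Y : Type*} [TopologicalSpace Y]
    (e : X → Y) (x₀ : X) (ξ : Y) : Set Y :=
  closure (⋃ C ∈ Set.Ici (0 : ℝ),
    ⋂ V ∈ {V : Set Y | IsOpen V ∧ ξ ∈ V},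
      closure (e '' halfspace x₀ (e ⁻¹' V) C))

section Halfspace

variable {X : Type*} [MetricSpace X] {x₀ x y : X} {W : Set X} {C : ℝ}

lemma mem_halfspace_of_dist_le (hx : x ∈ W) (h : dist y x ≤ dist y x₀ + C) :
    y ∈ halfspace x₀ W C :=
  (infDist_le_dist_of_mem hx).trans h

lemma exists_dist_lt_of_mem_halfspace {C' : ℝ} (hW : W.Nonempty) (hy : y ∈ halfspace x₀ W C)
    (hC : C < C') : ∃ x ∈ W, dist y x < dist y x₀ + C' :=
  (infDist_lt_iff hW).mp (lt_of_le_of_lt hy (by linarith))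

end Halfspace

section Star

variable {X : Type*} [MetricSpace X] {Y : Type*} [TopologicalSpace Y] {e : X → Y} {x₀ : X}
  {ξ : Y} {C : ℝ}

lemma mem_star_iff {η : Y} :
    η ∈ star e x₀ ξ ↔ ∀ U : Set Y, IsOpen U → η ∈ U → ∃ C : ℝ, 0 ≤ C ∧ ∃ p ∈ U,
      ∀ V : Set Y, IsOpen V → ξ ∈ V → p ∈ closure (e '' halfspace x₀ (e ⁻¹' V) C) := by
  rw [_root_.star, _root_.mem_closure_iff]
  refine forall₃_congr fun U _ _ => ?_
  simp only [Set.Nonempty, mem_inter_iff, mem_iUnion₂, mem_iInter₂, mem_Ici, mem_ofPred_eq,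
    exists_prop, and_imp]
  exact ⟨fun ⟨p, hpU, C, hC, hp⟩ => ⟨C, hC, p, hpU, hp⟩,
    fun ⟨C, hC, p, hpU, hp⟩ => ⟨p, hpU, C, hC, hp⟩⟩

lemma exists_dist_le_of_mem_closure_halfspace (hdense : Dense (range e)) {U V : Set Y} {p : Y}
    (hU : IsOpen U) (hpU : p ∈ U) (hV : IsOpen V) (hξV : ξ ∈ V)
    (hp : p ∈ closure (e '' halfspace x₀ (e ⁻¹' V) C)) :
    ∃ x y : X, e x ∈ V ∧ e y ∈ U ∧ dist y x ≤ dist y x₀ + (C + 1) := by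
  obtain ⟨_, hyU, y, hy, rfl⟩ := _root_.mem_closure_iff.mp hp U hU hpU
  have hVX : (e ⁻¹' V).Nonempty := by
    obtain ⟨_, hV', a, rfl⟩ := hdense.inter_open_nonempty V hV ⟨ξ, hξV⟩
    exact ⟨a, hV'⟩
  obtain ⟨x, hxV, hxy⟩ := exists_dist_lt_of_mem_halfspace hVX hy (lt_add_one C)
  exact ⟨x, y, hxV, hyU, hxy.le⟩

lemma exists_seq_of_forall_mem_closure_halfspace [FirstCountableTopology Y]
    (hdense : Dense (range e)) {U : Set Y} {p : Y} (hU : IsOpen U) (hpU : p ∈ U)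
    (hp : ∀ V : Set Y, IsOpen V → ξ ∈ V → p ∈ closure (e '' halfspace x₀ (e ⁻¹' V) C)) :
    ∃ x y : ℕ → X, Tendsto (fun n => e (x n)) atTop (𝓝 ξ) ∧ (∀ n, e (y n) ∈ U) ∧
      ∀ n, dist (y n) (x n) ≤ dist (y n) x₀ + (C + 1) := by
  obtain ⟨s, hs, hbasis⟩ := (nhds_basis_opens ξ).exists_antitone_subbasis
  have key (n : ℕ) := exists_dist_le_of_mem_closure_halfspace hdense hU hpU (hs n).2 (hs n).1
    (hp _ (hs n).2 (hs n).1)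
  choose x y hx hy hd using key
  exact ⟨x, y, hbasis.tendsto hx, hy, hd⟩

lemma mem_closure_halfspace_of_mapClusterPt {x y : ℕ → X} {z : Y}
    (hx : Tendsto (fun n => e (x n)) atTop (𝓝 ξ))
    (hd : ∀ n, dist (y n) (x n) ≤ dist (y n) x₀ + C)
    (hz : MapClusterPt z atTop (fun n => e (y n))) {V : Set Y} (hV : IsOpen V) (hξV : ξ ∈ V) :
    z ∈ closure (e '' halfspace x₀ (e ⁻¹' V) C) :=
  hz.mem_closure_of_mem _ <| (hx.eventually_mem (hV.mem_nhds hξV)).mono fun n hn =>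
    ⟨y n, mem_halfspace_of_dist_le hn (hd n), rfl⟩

end Star

theorem star_mem_iff_sequences_general
    {X : Type*} [MetricSpace X] {Y : Type*} [TopologicalSpace Y]
    [CompactSpace Y] [T2Space Y] [FirstCountableTopology Y]
    (e : X → Y)
    (hdense : Dense (Set.range e))
    (x₀ : X) (ξ η : Y) :
    η ∈ star e x₀ ξ ↔
      ∀ U : Set Y, IsOpen U → η ∈ U →
        ∃ C : ℝ, 0 ≤ C ∧ ∃ x y : ℕ → X,
          Filter.Tendsto (fun n => e (x n)) Filter.atTop (𝓝 ξ) ∧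
          (∀ᶠ n in Filter.atTop, e (y n) ∈ U) ∧
          ∀ n, dist (y n) (x n) ≤ dist (y n) x₀ + C := by
  rw [mem_star_iff]
  constructor
  · intro h U hU hηU
    obtain ⟨C, hC, p, hpU, hp⟩ := h U hU hηU
    obtain ⟨x, y, hx, hy, hd⟩ := exists_seq_of_forall_mem_closure_halfspace hdense hU hpU hp
    exact ⟨C + 1, by linarith, x, y, hx, Eventually.of_forall hy, hd⟩
  · intro h U hU hηU
    obtain ⟨t, htη, htc, htU⟩ := exists_mem_nhds_isClosed_subset (hU.mem_nhds hηU)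
    obtain ⟨C, hC, x, y, hx, hy, hd⟩ :=
      h (interior t) isOpen_interior (mem_interior_iff_mem_nhds.mpr htη)
    obtain ⟨z, -, hz⟩ := isCompact_univ.exists_mapClusterPt (f := atTop) (u := fun n => e (y n))
      (by simp)
    have hzt : z ∈ t := closure_minimal interior_subset htc (hz.mem_closure_of_mem _ hy)
    exact ⟨C, hC, z, htU hzt, fun V hV hξV =>
      mem_closure_halfspace_of_mapClusterPt hx hd hz hV hξV⟩

/-- Sequence criterion for star membership. -/
theorem star_mem_iff_sequences
    {X : Type*} [MetricSpace X] {Y : Type*} [TopologicalSpace Y]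
    [CompactSpace Y] [T2Space Y] [FirstCountableTopology Y]
    (e : X → Y) (he : Topology.IsEmbedding e)
    (hopen : IsOpen (Set.range e)) (hdense : Dense (Set.range e))
    (x₀ : X) (ξ η : Y) (hξ : ξ ∉ Set.range e) (hη : η ∉ Set.range e) :
    η ∈ star e x₀ ξ ↔
      ∀ U : Set Y, IsOpen U → η ∈ U →
        ∃ C : ℝ, 0 ≤ C ∧ ∃ x y : ℕ → X,
          Filter.Tendsto (fun n => e (x n)) Filter.atTop (𝓝 ξ) ∧
          (∀ᶠ n in Filter.atTop, e (y n) ∈ U) ∧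
          ∀ n, dist (y n) (x n) ≤ dist (y n) x₀ + C :=
  star_mem_iff_sequences_general e hdense x₀ ξ η
end

section
/- Every geodesic ray in the sup metric on ℝ² is directional: if γ : [0,∞) → ℝ × ℝ satisfies dist(γ(s), γ(t)) = |s − t| for all s, t ≥ 0 (where ℝ × ℝ carries the sup metric), then at least one of the following four alternatives holds for all t ≥ 0: (γ(t)).1 − (γ(0)).1 = t; or (γ(0)).1 − (γ(t)).1 = t; or (γ(t)).2 − (γ(0)).2 = t; or (γ(0)).2 − (γ(t)).2 = t. In other words, γ is parametrized by arclength by its x-coordinate, its y-coordinate, or the negative of one of these. -/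
/-!
Each coordinate of a geodesic ray is 1-Lipschitz, and since `dist (γ t) (γ 0) = t` in the sup
metric, at every time `t` one of the four signed coordinate displacements from `γ 0` equals `t`.
A 1-Lipschitz function that gains `T` over `[0, T]` gains at full speed on all of `[0, T]`, so
each alternative, once true at `T`, is true on `[0, T]`. One of them holds for arbitrarily
large `T`, hence everywhere.
-/

open Set Filter

lemma Prod.dist_eq_sub_fst_or_sub_snd (p q : ℝ × ℝ) :
    p.1 - q.1 = dist p q ∨ q.1 - p.1 = dist p q ∨
    p.2 - q.2 = dist p q ∨ q.2 - p.2 = dist p q := by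
  rw [Prod.dist_eq, Real.dist_eq, Real.dist_eq]
  rcases max_choice |p.1 - q.1| |p.2 - q.2| with h | h <;> rw [h]
  · rcases abs_choice (p.1 - q.1) with h' | h' <;> rw [h'] <;> simp
  · rcases abs_choice (p.2 - q.2) with h' | h' <;> rw [h'] <;> simp

namespace LipschitzOnWith

variable {f : ℝ → ℝ}

lemma sub_le_mul_sub {K : NNReal} {s : Set ℝ} (hf : LipschitzOnWith K f s) {a b : ℝ}
    (ha : a ∈ s) (hb : b ∈ s) (hab : a ≤ b) : f b - f a ≤ K * (b - a) := by
  have h := hf.dist_le_mul b hb a ha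
  rw [Real.dist_eq, Real.dist_eq, abs_of_nonneg (sub_nonneg.2 hab)] at h
  exact (le_abs_self _).trans h

lemma sub_apply_zero_eq_of_frequently (hf : LipschitzOnWith 1 f (Ici 0))
    (hfreq : ∃ᶠ T in atTop, f T - f 0 = T) {t : ℝ} (ht : 0 ≤ t) : f t - f 0 = t := by
  obtain ⟨T, htT, hT⟩ := frequently_atTop.mp hfreq t
  have h0t := hf.sub_le_mul_sub self_mem_Ici ht ht
  have htT' := hf.sub_le_mul_sub ht (ht.trans htT : 0 ≤ T) htT
  push_cast at h0t htT'
  linarith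

lemma apply_zero_sub_eq_of_frequently (hf : LipschitzOnWith 1 f (Ici 0))
    (hfreq : ∃ᶠ T in atTop, f 0 - f T = T) {t : ℝ} (ht : 0 ≤ t) : f 0 - f t = t := by
  simpa only [Pi.neg_apply, neg_sub_neg] using
    hf.neg.sub_apply_zero_eq_of_frequently
      (by simpa only [Pi.neg_apply, neg_sub_neg] using hfreq) ht

end LipschitzOnWith

/-- Every geodesic ray in `(ℝ², sup)` is directional: it is parametrized by arclength by
its `x`-coordinate, its `y`-coordinate, or the negative of one of these. -/
theorem sup_geodesic_ray_directional (γ : ℝ → ℝ × ℝ)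
    (hγ : ∀ s t : ℝ, 0 ≤ s → 0 ≤ t → dist (γ s) (γ t) = |s - t|) :
    (∀ t : ℝ, 0 ≤ t → (γ t).1 - (γ 0).1 = t) ∨
    (∀ t : ℝ, 0 ≤ t → (γ 0).1 - (γ t).1 = t) ∨
    (∀ t : ℝ, 0 ≤ t → (γ t).2 - (γ 0).2 = t) ∨
    (∀ t : ℝ, 0 ≤ t → (γ 0).2 - (γ t).2 = t) := by
  have hlip : LipschitzOnWith 1 γ (Ici 0) := LipschitzOnWith.of_dist_le_mul fun s hs t ht => by
    rw [hγ s t hs ht, NNReal.coe_one, one_mul, Real.dist_eq]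
  have hfst : LipschitzOnWith 1 (fun t => (γ t).1) (Ici 0) := by
    simpa [Function.comp_def] using LipschitzWith.prod_fst.comp_lipschitzOnWith hlip
  have hsnd : LipschitzOnWith 1 (fun t => (γ t).2) (Ici 0) := by
    simpa [Function.comp_def] using LipschitzWith.prod_snd.comp_lipschitzOnWith hlip
  have hdir : ∃ᶠ t in atTop, (γ t).1 - (γ 0).1 = t ∨ (γ 0).1 - (γ t).1 = t ∨
      (γ t).2 - (γ 0).2 = t ∨ (γ 0).2 - (γ t).2 = t := by
    refine Eventually.frequently ?_
    filter_upwards [eventually_ge_atTop 0] with t ht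
    simpa only [hγ t 0 ht le_rfl, sub_zero, abs_of_nonneg ht]
      using Prod.dist_eq_sub_fst_or_sub_snd (γ t) (γ 0)
  simp only [frequently_or_distrib] at hdir
  rcases hdir with h | h | h | h
  · exact .inl fun t => hfst.sub_apply_zero_eq_of_frequently h
  · exact .inr <| .inl fun t => hfst.apply_zero_sub_eq_of_frequently h
  · exact .inr <| .inr <| .inl fun t => hsnd.sub_apply_zero_eq_of_frequently h
  · exact .inr <| .inr <| .inr fun t => hsnd.apply_zero_sub_eq_of_frequently h
end

section
/- For each m ≥ 0, the curve α^{NE}_m(t) = (max(0, t − m), t) is a unit-speed geodesic ray in the sup metric on ℝ²: dist(α^{NE}_m(s), α^{NE}_m(t)) = |s − t| for all s, t ≥ 0; and its Busemann function based at the origin is h^{NE}_m(x,y) = max(−x − m, −y): for every point z = (x,y) ∈ ℝ × ℝ, the limit as t → ∞ of dist(α^{NE}_m(t), z) − dist(α^{NE}_m(t), (0,0)) exists and equals max(−x − m, −y). -/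
/-! The first coordinate of `α^{NE}_m` is a 1-Lipschitz function of the second, so in the sup
metric the second coordinate alone realises distances along the ray. Once `t ≥ m` and the ray has
passed `z` in both coordinates, every distance involved is a difference of coordinates, and the
difference of the two distances is the constant `max (-z.1 - m) (-z.2)`. -/

open Filter Topology

theorem LipschitzWith.dist_prodMk_self_eq {α β : Type*} [PseudoMetricSpace α]
    [PseudoMetricSpace β] {f : α → β} (hf : LipschitzWith 1 f) (s t : α) :
    dist (f s, s) (f t, t) = dist s t := by
  rw [Prod.dist_eq, max_eq_right (by simpa using hf.dist_le_mul s t)]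

theorem lipschitzWith_max_zero_sub_const (m : ℝ) : LipschitzWith 1 fun t : ℝ => max 0 (t - m) :=
  (IsometryEquiv.subRight m).isometry.lipschitz.const_max 0

theorem Prod.dist_eq_max_sub_of_le {p z : ℝ × ℝ} (h : z ≤ p) :
    dist p z = max (p.1 - z.1) (p.2 - z.2) := by
  rw [Prod.dist_eq, Real.dist_eq, Real.dist_eq, abs_of_nonneg (sub_nonneg.2 h.1),
    abs_of_nonneg (sub_nonneg.2 h.2)]

theorem dist_sub_dist_zero_eq_max {m t : ℝ} {z : ℝ × ℝ} (hm : 0 ≤ m) (hmt : m ≤ t)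
    (h₁ : z.1 + m ≤ t) (h₂ : z.2 ≤ t) :
    dist ((t - m, t) : ℝ × ℝ) z - dist ((t - m, t) : ℝ × ℝ) 0 = max (-z.1 - m) (-z.2) := by
  have hz : z ≤ (t - m, t) := ⟨by change z.1 ≤ t - m; linarith, h₂⟩
  have h0 : (0 : ℝ × ℝ) ≤ (t - m, t) := ⟨sub_nonneg.2 hmt, hm.trans hmt⟩
  rw [Prod.dist_eq_max_sub_of_le hz, Prod.dist_eq_max_sub_of_le h0]
  calc max (t - m - z.1) (t - z.2) - max (t - m - 0) (t - 0)
      = (t + max (-z.1 - m) (-z.2)) - t := by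
        rw [← max_add_add_left, max_eq_right (by linarith : t - m - 0 ≤ t - 0)]; ring_nf
    _ = max (-z.1 - m) (-z.2) := add_sub_cancel_left _ _

/-- For `m ≥ 0`, the curve `α^{NE}_m(t) = (max 0 (t - m), t)` is a unit-speed geodesic ray in
`(ℝ², sup)`, and its Busemann function based at the origin is `(x, y) ↦ max (-x - m) (-y)`. -/
theorem alphaNE_geodesic_and_busemann (m : ℝ) (hm : 0 ≤ m) :
    (∀ s t : ℝ, 0 ≤ s → 0 ≤ t →
        dist ((max 0 (s - m), s) : ℝ × ℝ) ((max 0 (t - m), t) : ℝ × ℝ) = |s - t|) ∧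
    (∀ z : ℝ × ℝ,
      Filter.Tendsto
        (fun t : ℝ => dist ((max 0 (t - m), t) : ℝ × ℝ) z
          - dist ((max 0 (t - m), t) : ℝ × ℝ) ((0, 0) : ℝ × ℝ))
        Filter.atTop (𝓝 (max (-z.1 - m) (-z.2)))) := by
  refine ⟨fun s t _ _ => (lipschitzWith_max_zero_sub_const m).dist_prodMk_self_eq s t, fun z => ?_⟩
  refine tendsto_const_nhds.congr' ?_
  filter_upwards [eventually_ge_atTop m, eventually_ge_atTop (z.1 + m),
    eventually_ge_atTop z.2] with t hmt h₁ h₂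
  rw [max_eq_right (sub_nonneg.2 hmt)]
  exact (dist_sub_dist_zero_eq_max hm hmt h₁ h₂).symm
end

section
/- Horofunctions for the sup metric on ℝ², axial case: let z_n = (x_n, y_n) be a sequence in ℝ × ℝ (with the sup metric) such that y_n − |x_n| → +∞. Then for every point z = (x,y) ∈ ℝ × ℝ, the sequence dist(z_n, z) − dist(z_n, (0,0)) converges to −y (the horofunction h^N of the north geodesic). -/
open Filter Topology

/-!
Far enough in the cone `|x| ≤ y - c` above a point, the vertical coordinate realises the sup
distance to that point, so `dist (z_n, p) = y_n - p.2` and `dist (z_n, 0) = y_n` eventually, and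
their difference is the constant `-p.2`.
-/

namespace Prod

theorem dist_eq_snd_sub_of_abs_fst_sub_le {z p : ℝ × ℝ} (hz : |z.1 - p.1| ≤ z.2 - p.2) :
    dist z p = z.2 - p.2 := by
  have hy : 0 ≤ z.2 - p.2 := (abs_nonneg _).trans hz
  rw [Prod.dist_eq, Real.dist_eq, Real.dist_eq, abs_of_nonneg hy, max_eq_right hz]

theorem abs_fst_sub_le_snd_sub_of_le {z p : ℝ × ℝ} (hz : |p.1| + |p.2| ≤ z.2 - |z.1|) :
    |z.1 - p.1| ≤ z.2 - p.2 := by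
  have := abs_sub z.1 p.1
  have := le_abs_self p.2
  linarith

theorem dist_sub_dist_zero_eq_neg_snd {z p : ℝ × ℝ} (hz : |p.1| + |p.2| ≤ z.2 - |z.1|) :
    dist z p - dist z (0, 0) = -p.2 := by
  have h0 : |(0 : ℝ)| + |(0 : ℝ)| ≤ z.2 - |z.1| := by
    simpa using (add_nonneg (abs_nonneg p.1) (abs_nonneg p.2)).trans hz
  rw [dist_eq_snd_sub_of_abs_fst_sub_le (abs_fst_sub_le_snd_sub_of_le hz),
    dist_eq_snd_sub_of_abs_fst_sub_le (abs_fst_sub_le_snd_sub_of_le (p := (0, 0)) h0)]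
  ring

end Prod

/-- Axial horofunction of `(ℝ², sup)`: if `y_n - |x_n| → +∞`, then
`dist (z_n, z) - dist (z_n, 0) → -y` for every `z = (x, y)`. -/
theorem sup_horofunction_axial (z : ℕ → ℝ × ℝ)
    (h : Filter.Tendsto (fun n => (z n).2 - |(z n).1|) Filter.atTop Filter.atTop) :
    ∀ p : ℝ × ℝ,
      Filter.Tendsto (fun n => dist (z n) p - dist (z n) ((0, 0) : ℝ × ℝ))
        Filter.atTop (𝓝 (-p.2)) := by
  intro p
  refine tendsto_const_nhds.congr' ?_
  filter_upwards [h.eventually_ge_atTop (|p.1| + |p.2|)] with n hn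
  exact (Prod.dist_sub_dist_zero_eq_neg_snd hn).symm
end

section
/- Horofunctions for the sup metric on ℝ², nonaxial case: let m ≥ 0 and let z_n = (x_n, y_n) be a sequence in ℝ × ℝ (with the sup metric) such that x_n → +∞, y_n → +∞, and y_n − x_n → m. Then for every point z = (x,y) ∈ ℝ × ℝ, the sequence dist(z_n, z) − dist(z_n, (0,0)) converges to max(−x − m, −y) (the horofunction h^{NE}_m). -/
/-!
Once `z_n` dominates both `p` and the origin coordinatewise, all absolute values in the two sup
distances open up, and after subtracting `x_n` from both the difference
`dist (z_n, p) - dist (z_n, 0)` becomes `max (-p.1) (d_n - p.2) - max 0 d_n` with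
`d_n = y_n - x_n`. This is continuous in `d_n`, so it tends to `max (-p.1) (m - p.2) - m`.
-/

open Filter Topology

lemma Prod.dist_sub_dist_zero_eq_of_le {p q : ℝ × ℝ} (hp : p ≤ q) (hq : 0 ≤ q) :
    dist q p - dist q 0 = max (-p.1) (q.2 - q.1 - p.2) - max 0 (q.2 - q.1) := by
  have hp₁ : p.1 ≤ q.1 := hp.1
  have hp₂ : p.2 ≤ q.2 := hp.2
  have hq₁ : 0 ≤ q.1 := hq.1
  have hq₂ : 0 ≤ q.2 := hq.2
  simp only [Prod.dist_eq, Real.dist_eq, Prod.fst_zero, Prod.snd_zero, sub_zero,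
    abs_of_nonneg (sub_nonneg.2 hp₁), abs_of_nonneg (sub_nonneg.2 hp₂), abs_of_nonneg hq₁,
    abs_of_nonneg hq₂]
  have hdist : max (q.1 - p.1) (q.2 - p.2) = q.1 + max (-p.1) (q.2 - q.1 - p.2) := by
    rw [← max_add_add_left]; ring_nf
  have hnorm : max q.1 q.2 = q.1 + max 0 (q.2 - q.1) := by
    rw [← max_add_add_left]; ring_nf
  rw [hdist, hnorm]
  ring

/-- Nonaxial horofunction of `(ℝ², sup)`: if `x_n → +∞`, `y_n → +∞`, `y_n - x_n → m ≥ 0`, then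
`dist (z_n, z) - dist (z_n, 0) → max (-x - m) (-y)` for every `z = (x, y)`. -/
theorem sup_horofunction_nonaxial (m : ℝ) (hm : 0 ≤ m) (z : ℕ → ℝ × ℝ)
    (hx : Filter.Tendsto (fun n => (z n).1) Filter.atTop Filter.atTop)
    (hy : Filter.Tendsto (fun n => (z n).2) Filter.atTop Filter.atTop)
    (hdiff : Filter.Tendsto (fun n => (z n).2 - (z n).1) Filter.atTop (𝓝 m)) :
    ∀ p : ℝ × ℝ,
      Filter.Tendsto (fun n => dist (z n) p - dist (z n) ((0, 0) : ℝ × ℝ))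
        Filter.atTop (𝓝 (max (-p.1 - m) (-p.2))) := by
  intro p
  have hz : Tendsto z atTop atTop := by
    rw [← prod_atTop_atTop_eq]
    exact hx.prodMk hy
  have hlimit : max (-p.1 - m) (-p.2) = max (-p.1) (m - p.2) - max 0 m := by
    rw [max_eq_right hm, ← max_sub_sub_right]
    ring_nf
  rw [hlimit]
  refine ((tendsto_const_nhds.max (hdiff.sub_const p.2)).sub
    (tendsto_const_nhds.max hdiff)).congr' ?_
  filter_upwards [hz.eventually_ge_atTop (p ⊔ 0)] with n hn
  exact (Prod.dist_sub_dist_zero_eq_of_le (le_sup_left.trans hn) (le_sup_right.trans hn)).symm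
end

section
/- Quadrant stabilization for northerly sequences: let z(n) = (x_n, y_n) be a northerly sequence in ℝ × ℝ (i.e. y_{n+1} − y_n ≥ |x_{n+1} − x_n| for all n) with y_n → +∞, and suppose there is M ≥ 0 such that y_n − |x_n| ≤ M for all n. Then the sequence eventually stays in one closed half-plane: there exists N such that either x_n ≥ 0 for all n ≥ N, or x_n ≤ 0 for all n ≥ N. -/
open Filter

/-! If `x` changes sign (weakly) between steps `n` and `n + 1`, the `x`-displacement is
`|x_n| + |x_{n+1}|`, and the northerly condition gives `y_{n+1} - |x_{n+1}| ≥ y_n + |x_n| ≥ y_n`.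
Once `y_n > M` this contradicts `y - |x| ≤ M`, so from then on consecutive `x_n` have the same
strict sign. -/

section SignChange

variable {α : Type*} [CommRing α] [LinearOrder α] [IsStrictOrderedRing α]

theorem abs_sub_eq_abs_add_abs_of_mul_nonpos {a b : α} (h : a * b ≤ 0) :
    |a - b| = |a| + |b| := by
  rw [sub_eq_add_neg, ← abs_neg b, abs_add_eq_add_abs_iff, neg_nonneg, neg_nonpos]
  rcases mul_nonpos_iff.mp h with hab | hab <;> tauto

theorem add_abs_le_sub_abs_of_abs_sub_le_of_mul_nonpos {x x' y y' : α}
    (hstep : |x' - x| ≤ y' - y) (hx : x * x' ≤ 0) : y + |x| ≤ y' - |x'| := by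
  rw [abs_sub_eq_abs_add_abs_of_mul_nonpos (by rwa [mul_comm])] at hstep
  linarith

theorem pos_or_neg_of_forall_mul_succ_pos {x : ℕ → α} {N : ℕ}
    (h : ∀ n ≥ N, 0 < x n * x (n + 1)) : (∀ n ≥ N, 0 < x n) ∨ ∀ n ≥ N, x n < 0 := by
  rcases (pos_and_pos_or_neg_and_neg_of_mul_pos (h N le_rfl)).imp And.left And.left with
    hpos | hneg
  · refine .inl fun n hn => Nat.le_induction hpos (fun k hk hk_pos => ?_) n hn
    exact (pos_iff_pos_of_mul_pos (h k hk)).mp hk_pos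
  · refine .inr fun n hn => Nat.le_induction hneg (fun k hk hk_neg => ?_) n hn
    exact (neg_iff_neg_of_mul_pos (h k hk)).mp hk_neg

end SignChange

theorem northerly_quadrant_stabilization_general (z : ℕ → ℝ × ℝ)
    (hnortherly : ∀ n : ℕ, (z (n + 1)).2 - (z n).2 ≥ |(z (n + 1)).1 - (z n).1|)
    (hy : Filter.Tendsto (fun n => (z n).2) Filter.atTop Filter.atTop)
    (M : ℝ) (hbdd : ∀ n : ℕ, (z n).2 - |(z n).1| ≤ M) :
    ∃ N : ℕ, (∀ n ≥ N, 0 ≤ (z n).1) ∨ (∀ n ≥ N, (z n).1 ≤ 0) := by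
  obtain ⟨N, hN⟩ := (hy.eventually_gt_atTop M).exists_forall_of_atTop
  have hsame_sign : ∀ n ≥ N, 0 < (z n).1 * (z (n + 1)).1 := fun n hn => by
    by_contra! hcross
    have := add_abs_le_sub_abs_of_abs_sub_le_of_mul_nonpos (hnortherly n) hcross
    linarith [hN n hn, hbdd (n + 1), abs_nonneg (z n).1]
  exact ⟨N, (pos_or_neg_of_forall_mul_succ_pos hsame_sign).imp
    (fun hpos n hn => (hpos n hn).le) (fun hneg n hn => (hneg n hn).le)⟩

/-- Quadrant stabilization: a northerly sequence with `y_n → +∞` and `y_n - |x_n|` bounded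
eventually stays in one closed half-plane. -/
theorem northerly_quadrant_stabilization (z : ℕ → ℝ × ℝ)
    (hnortherly : ∀ n : ℕ, (z (n + 1)).2 - (z n).2 ≥ |(z (n + 1)).1 - (z n).1|)
    (hy : Filter.Tendsto (fun n => (z n).2) Filter.atTop Filter.atTop)
    (M : ℝ) (hM : 0 ≤ M) (hbdd : ∀ n : ℕ, (z n).2 - |(z n).1| ≤ M) :
    ∃ N : ℕ, (∀ n ≥ N, 0 ≤ (z n).1) ∨ (∀ n ≥ N, (z n).1 ≤ 0) :=
  northerly_quadrant_stabilization_general z hnortherly hy M hbdd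
end

section
/- Convergence criterion for nonaxial horofunctions in the sup metric on ℝ²: let m ≥ 0 and let z_n = (x_n, y_n) be a sequence in ℝ × ℝ (with the sup metric). Then the following are equivalent: (i) for every z = (x,y) ∈ ℝ × ℝ, dist(z_n, z) − dist(z_n, (0,0)) → max(−x − m, −y); (ii) x_n → +∞, y_n → +∞, and y_n − x_n → m. -/
open Filter Topology

/-!
Write `z_n = (a_n, b_n)` and `d_n = b_n - a_n`. As soon as `a_n, b_n ≥ 0` dominate the coordinates
of `p = (x, y)`, the sup metric gives exactly
`dist z_n p - dist z_n 0 = max (-x) (d_n - y) - max 0 d_n` (`nonaxialHorofunction d_n p`), which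
for `d_n = m ≥ 0` is the horofunction `max (-x - m) (-y)`. So (ii) ⇒ (i) is continuity in `d`,
and in (i) ⇒ (ii) the test points `(0, y)` and `(1, 0)` recover `d_n → m` once `a_n, b_n → ∞`.

For the divergence: since `dist z_n p - dist z_n 0 ≥ -dist z_n 0` and the limit is unbounded
below, `dist z_n 0 → ∞`. At `p = (0, -1)` the limit `1` is the largest value the triangle
inequality allows, which forces `b_n > |a_n| - 1/2`, hence `b_n → ∞`; at `p = (-(m + 1), 0)` the
limit `1` forces `a_n > |b_n| - m - 1/2`, hence `a_n → ∞`.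
-/

theorem tendsto_dist_atTop_of_tendsto_dist_sub_dist {ι X : Type*} [PseudoMetricSpace X]
    {l : Filter ι} {z : ι → X} {o : X} {h : X → ℝ}
    (hz : ∀ p, Tendsto (fun n => dist (z n) p - dist (z n) o) l (𝓝 (h p)))
    (hh : ∀ R, ∃ p, h p < R) : Tendsto (fun n => dist (z n) o) l atTop := by
  refine tendsto_atTop.2 fun R => ?_
  obtain ⟨p, hp⟩ := hh (-R)
  filter_upwards [(hz p).eventually_lt_const hp] with n hn
  linarith [dist_nonneg (x := z n) (y := p)]

theorem dist_eq_max_abs_sub (z p : ℝ × ℝ) : dist z p = max |z.1 - p.1| |z.2 - p.2| := by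
  rw [Prod.dist_eq, Real.dist_eq, Real.dist_eq]

theorem abs_sub_lt_of_lt_max_abs_add_sub_max_abs {a b c k : ℝ} (hk₀ : 0 ≤ k) (hk : k < c)
    (h : c - k < max |a + c| |b| - max |a| |b|) : |b| - k < a := by
  have ha : |a| ≤ max |a| |b| := le_max_left _ _
  have hb : |b| ≤ max |a| |b| := le_max_right _ _
  have h : c - k + max |a| |b| < max |a + c| |b| := by linarith
  rcases lt_max_iff.1 h with h | h
  · rcases lt_abs.1 h with h | h
    · linarith
    · linarith [neg_le_abs a]
  · linarith

def nonaxialHorofunction (d : ℝ) (p : ℝ × ℝ) : ℝ := max (-p.1) (d - p.2) - max 0 d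

theorem nonaxialHorofunction_of_nonneg {d : ℝ} (hd : 0 ≤ d) (p : ℝ × ℝ) :
    nonaxialHorofunction d p = max (-p.1 - d) (-p.2) := by
  rw [nonaxialHorofunction, max_eq_right hd, ← max_sub_sub_right]
  ring_nf

theorem dist_sub_dist_zero_eq_nonaxialHorofunction {z p : ℝ × ℝ} (h₁ : p.1 ≤ z.1)
    (h₁₀ : 0 ≤ z.1) (h₂ : p.2 ≤ z.2) (h₂₀ : 0 ≤ z.2) :
    dist z p - dist z (0, 0) = nonaxialHorofunction (z.2 - z.1) p := by
  rw [dist_eq_max_abs_sub, dist_eq_max_abs_sub, nonaxialHorofunction]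
  simp only [sub_zero]
  rw [abs_of_nonneg (sub_nonneg.2 h₁), abs_of_nonneg (sub_nonneg.2 h₂), abs_of_nonneg h₁₀,
    abs_of_nonneg h₂₀]
  have e₁ : max (z.1 - p.1) (z.2 - p.2) = z.1 + max (-p.1) (z.2 - z.1 - p.2) := by
    rw [← max_add_add_left]; congr 1; ring
  have e₂ : max z.1 z.2 = z.1 + max 0 (z.2 - z.1) := by
    rw [← max_add_add_left, add_zero, add_sub_cancel]
  rw [e₁, e₂]; ring

theorem continuous_nonaxialHorofunction (p : ℝ × ℝ) :
    Continuous fun d => nonaxialHorofunction d p := by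
  unfold nonaxialHorofunction; fun_prop

theorem tendsto_of_tendsto_nonaxialHorofunction {ι : Type*} {l : Filter ι} {d : ι → ℝ} {m : ℝ}
    (hm : 0 ≤ m)
    (h : ∀ p, Tendsto (fun n => nonaxialHorofunction (d n) p) l (𝓝 (nonaxialHorofunction m p))) :
    Tendsto d l (𝓝 m) := by
  simp only [nonaxialHorofunction_of_nonneg hm] at h
  refine tendsto_order.2 ⟨fun u hu => ?_, fun u hu => ?_⟩
  · rcases lt_or_ge u 0 with hu₀ | hu₀
    · have hlim : max (-1) u < max (-(1, (0 : ℝ)).1 - m) (-(1, (0 : ℝ)).2) := by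
        simp only [neg_zero]; exact max_lt_iff.2 ⟨by norm_num, hu₀⟩ |>.trans_le (le_max_right _ _)
      filter_upwards [(h (1, 0)).eventually_const_lt hlim] with n hn
      by_contra! hd
      simp only [nonaxialHorofunction, sub_zero, max_eq_left (hd.trans hu₀.le)] at hn
      linarith [max_le_max (le_refl (-1 : ℝ)) hd]
    · have hlim : max (-(0, m).1 - m) (-(0, m).2) < -u :=
        max_lt (by dsimp only; linarith) (by dsimp only; linarith)
      filter_upwards [(h (0, m)).eventually_lt_const hlim] with n hn
      by_contra! hd
      simp only [nonaxialHorofunction, neg_zero] at hn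
      linarith [le_max_left 0 (d n - m), max_le hu₀ hd]
  · have hlim : -u < max (-(0, u).1 - m) (-(0, u).2) :=
      lt_max_of_lt_left (by dsimp only; linarith)
    filter_upwards [(h (0, u)).eventually_const_lt hlim] with n hn
    by_contra! hd
    simp only [nonaxialHorofunction, neg_zero, max_eq_right (sub_nonneg.2 hd),
      max_eq_right (hm.trans (hu.le.trans hd))] at hn
    linarith

section Horofunction

variable {ι : Type*} {l : Filter ι} {z : ι → ℝ × ℝ} {m : ℝ}

theorem eventuallyEq_nonaxialHorofunction (h₁ : Tendsto (fun n => (z n).1) l atTop)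
    (h₂ : Tendsto (fun n => (z n).2) l atTop) (p : ℝ × ℝ) :
    (fun n => dist (z n) p - dist (z n) (0, 0)) =ᶠ[l]
      fun n => nonaxialHorofunction ((z n).2 - (z n).1) p := by
  filter_upwards [h₁.eventually_ge_atTop (max p.1 0), h₂.eventually_ge_atTop (max p.2 0)]
    with n hn₁ hn₂
  exact dist_sub_dist_zero_eq_nonaxialHorofunction (le_of_max_le_left hn₁)
    (le_of_max_le_right hn₁) (le_of_max_le_left hn₂) (le_of_max_le_right hn₂)

theorem tendsto_snd_atTop_of_tendsto_dist_sub_dist (hm : 0 ≤ m)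
    (h : ∀ p : ℝ × ℝ, Tendsto (fun n => dist (z n) p - dist (z n) (0, 0)) l
      (𝓝 (max (-p.1 - m) (-p.2)))) :
    Tendsto (fun n => (z n).2) l atTop := by
  have hdist : Tendsto (fun n => dist (z n) (0, 0)) l atTop :=
    tendsto_dist_atTop_of_tendsto_dist_sub_dist h fun R =>
      ⟨(1 - R, 1 - R), by dsimp only; exact max_lt (by linarith) (by linarith)⟩
  have hlim : (1 / 2 : ℝ) < max (-(0, (-1 : ℝ)).1 - m) (-(0, (-1 : ℝ)).2) :=
    lt_max_of_lt_right (by norm_num)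
  refine tendsto_atTop_mono' l ?_ (tendsto_atTop_add_const_right l (-1) hdist)
  filter_upwards [(h (0, -1)).eventually_const_lt hlim] with n hn
  simp only [dist_eq_max_abs_sub, sub_zero, sub_neg_eq_add] at hn ⊢
  rw [max_comm, max_comm |(z n).1|] at hn
  have hgap := abs_sub_lt_of_lt_max_abs_add_sub_max_abs (a := (z n).2) (b := (z n).1)
    (c := 1) (k := 1 / 2) (by norm_num) (by norm_num) (by linarith)
  have hb : |(z n).2| ≤ (z n).2 + 1 := abs_le.2 ⟨by linarith [abs_nonneg (z n).1], by linarith⟩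
  linarith [max_le (by linarith : |(z n).1| ≤ (z n).2 + 1) hb]

theorem tendsto_fst_atTop_of_tendsto_dist_sub_dist (hm : 0 ≤ m)
    (h : ∀ p : ℝ × ℝ, Tendsto (fun n => dist (z n) p - dist (z n) (0, 0)) l
      (𝓝 (max (-p.1 - m) (-p.2)))) :
    Tendsto (fun n => (z n).1) l atTop := by
  have hlim : (1 / 2 : ℝ) < max (-(-(m + 1), (0 : ℝ)).1 - m) (-(-(m + 1), (0 : ℝ)).2) :=
    lt_max_of_lt_left (by linarith)
  refine tendsto_atTop_mono' l ?_ (tendsto_atTop_add_const_right l (-(m + 1 / 2))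
    (tendsto_snd_atTop_of_tendsto_dist_sub_dist hm h))
  filter_upwards [(h (-(m + 1), 0)).eventually_const_lt hlim] with n hn
  simp only [dist_eq_max_abs_sub, sub_zero, sub_neg_eq_add] at hn
  have hgap := abs_sub_lt_of_lt_max_abs_add_sub_max_abs (a := (z n).1) (b := (z n).2)
    (c := m + 1) (k := m + 1 / 2) (by linarith) (by linarith) (by linarith)
  linarith [le_abs_self (z n).2]

end Horofunction

/-- Convergence criterion for nonaxial horofunctions in `(ℝ², sup)`:
`dist (z_n, ·) - dist (z_n, 0)` converges pointwise to `max (-x - m) (-y)` if and only if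
`x_n → +∞`, `y_n → +∞`, and `y_n - x_n → m`. -/
theorem sup_horofunction_nonaxial_iff (m : ℝ) (hm : 0 ≤ m) (z : ℕ → ℝ × ℝ) :
    (∀ p : ℝ × ℝ,
        Filter.Tendsto (fun n => dist (z n) p - dist (z n) ((0, 0) : ℝ × ℝ))
          Filter.atTop (𝓝 (max (-p.1 - m) (-p.2)))) ↔
    (Filter.Tendsto (fun n => (z n).1) Filter.atTop Filter.atTop ∧
     Filter.Tendsto (fun n => (z n).2) Filter.atTop Filter.atTop ∧
     Filter.Tendsto (fun n => (z n).2 - (z n).1) Filter.atTop (𝓝 m)) := by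
  constructor
  · intro h
    have ha := tendsto_fst_atTop_of_tendsto_dist_sub_dist hm h
    have hb := tendsto_snd_atTop_of_tendsto_dist_sub_dist hm h
    refine ⟨ha, hb, tendsto_of_tendsto_nonaxialHorofunction hm fun p => ?_⟩
    rw [nonaxialHorofunction_of_nonneg hm]
    exact (h p).congr' (eventuallyEq_nonaxialHorofunction ha hb p)
  · rintro ⟨ha, hb, hd⟩ p
    rw [← nonaxialHorofunction_of_nonneg hm]
    exact (((continuous_nonaxialHorofunction p).tendsto m).comp hd).congr'
      (eventuallyEq_nonaxialHorofunction ha hb p).symm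
end

section
/- Separation estimate showing h^{NW}_m ∉ S(h^E) in the sup metric on ℝ²: let m > 0 and C ≥ 0. Suppose z_n = (x_n, y_n) is a sequence in ℝ × ℝ with x_n → +∞ and x_n − |y_n| → +∞ (so z_n converges to the east horofunction), and w_n = (u_n, v_n) is a sequence with v_n > 2m and −u_n + m − 1 < v_n < −u_n + m + 1 for all n, and max(|u_n|, |v_n|) → +∞. Then for all sufficiently large n, dist(w_n, z_n) > dist(w_n, (0,0)) + C. -/
/-!
In the sup metric `dist w z ≥ z.1 - w.1`, while on the band `|w.1 + w.2 - m| < 1` with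
`w.2 ≥ m / 2 ≥ 0` one has `dist w 0 = max |w.1| |w.2| ≤ w.2 + 1`. Since `w.1 + w.2 < m + 1`
there, `dist w z - dist w 0 > z.1 - (m + 2)`, which exceeds `C` once `z.1` is large.
-/

theorem fst_sub_fst_le_dist (p q : ℝ × ℝ) : q.1 - p.1 ≤ dist p q :=
  calc q.1 - p.1 ≤ |p.1 - q.1| := by rw [abs_sub_comm]; exact le_abs_self _
    _ = dist p.1 q.1 := (Real.dist_eq _ _).symm
    _ ≤ dist p q := by rw [Prod.dist_eq]; exact le_max_left _ _

theorem dist_origin_le_snd_add_one_of_band {m : ℝ} {w : ℝ × ℝ} (hm : 0 ≤ m) (hv : m ≤ 2 * w.2)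
    (hband : -w.1 + m - 1 < w.2 ∧ w.2 < -w.1 + m + 1) :
    dist w ((0, 0) : ℝ × ℝ) ≤ w.2 + 1 := by
  obtain ⟨hlower, hupper⟩ := hband
  rw [Prod.dist_eq, Real.dist_eq, Real.dist_eq, sub_zero, sub_zero]
  exact max_le (abs_le.mpr ⟨by linarith, by linarith⟩) (abs_le.mpr ⟨by linarith, by linarith⟩)

theorem dist_origin_add_lt_dist_of_band {m : ℝ} {w : ℝ × ℝ} (hm : 0 ≤ m) (hv : m ≤ 2 * w.2)
    (hband : -w.1 + m - 1 < w.2 ∧ w.2 < -w.1 + m + 1) (z : ℝ × ℝ) :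
    dist w ((0, 0) : ℝ × ℝ) + (z.1 - (m + 2)) < dist w z := by
  have hz := fst_sub_fst_le_dist w z
  have h0 := dist_origin_le_snd_add_one_of_band hm hv hband
  linarith [hband.2]

theorem sup_separation_east_general (m : ℝ) (hm : 0 < m) (C : ℝ)
    (z w : ℕ → ℝ × ℝ)
    (hzx : Filter.Tendsto (fun n => (z n).1) Filter.atTop Filter.atTop)
    (hwv : ∀ n, (w n).2 > 2 * m)
    (hwband : ∀ n, -(w n).1 + m - 1 < (w n).2 ∧ (w n).2 < -(w n).1 + m + 1) :
    ∀ᶠ n in Filter.atTop, dist (w n) (z n) > dist (w n) ((0, 0) : ℝ × ℝ) + C := by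
  filter_upwards [hzx.eventually_gt_atTop (m + 2 + C)] with n hzn
  have hv : m ≤ 2 * (w n).2 := by linarith [hwv n]
  linarith [dist_origin_add_lt_dist_of_band hm.le hv (hwband n) (z n)]

/-- Separation estimate: if `z_n` converges to the east horofunction and `w_n` stays in the
neighborhood `U` of `h^{NW}_m` and leaves all bounded sets, then eventually
`dist (w_n, z_n) > dist (w_n, 0) + C`. -/
theorem sup_separation_east (m : ℝ) (hm : 0 < m) (C : ℝ) (hC : 0 ≤ C)
    (z w : ℕ → ℝ × ℝ)
    (hzx : Filter.Tendsto (fun n => (z n).1) Filter.atTop Filter.atTop)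
    (hzdiff : Filter.Tendsto (fun n => (z n).1 - |(z n).2|) Filter.atTop Filter.atTop)
    (hwv : ∀ n, (w n).2 > 2 * m)
    (hwband : ∀ n, -(w n).1 + m - 1 < (w n).2 ∧ (w n).2 < -(w n).1 + m + 1)
    (hwinf : Filter.Tendsto (fun n => max |(w n).1| |(w n).2|) Filter.atTop Filter.atTop) :
    ∀ᶠ n in Filter.atTop, dist (w n) (z n) > dist (w n) ((0, 0) : ℝ × ℝ) + C :=
  sup_separation_east_general m hm C z w hzx hwv hwband
end

section
/- Separation estimate showing h^{NW}_ℓ ∉ S(h^{NE}_m) in the sup metric on ℝ²: let m ≥ 0, ℓ > 0 and C ≥ 0. Suppose z_n = (x_n, y_n) is a sequence in ℝ × ℝ with x_n → +∞, y_n → +∞, and y_n − x_n → m (so z_n converges to the horofunction h^{NE}_m), and w_n = (u_n, v_n) is a sequence with v_n > 2ℓ and −u_n + ℓ − 1 < v_n < −u_n + ℓ + 1 for all n, and max(|u_n|, |v_n|) → +∞. Then for all sufficiently large n, dist(w_n, z_n) > dist(w_n, (0,0)) + C. -/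
/-!
A point `w = (u, v)` of the band `-u + ℓ - 1 < v < -u + ℓ + 1` with `v > 2ℓ` has `|u| ≤ v + 1 - ℓ`,
so its sup-distance to the origin is at most `v + 1`. On the other hand its distance to `z = (x, y)`
is at least `x - u > x + v - ℓ - 1`, so once `x > ℓ + 2 + C` the point `z` is farther from `w` than
the origin by more than `C`.
-/

open Filter Topology

section Band

variable {l : ℝ} {w : ℝ × ℝ}

lemma abs_fst_le_of_mem_band (hv : l ≤ w.2)
    (hband : -w.1 + l - 1 < w.2 ∧ w.2 < -w.1 + l + 1) :
    |w.1| ≤ w.2 + 1 - l :=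
  abs_le.2 ⟨by linarith [hband.1], by linarith [hband.2]⟩

lemma dist_zero_le_of_mem_band (hl : 0 < l) (hv : 2 * l < w.2)
    (hband : -w.1 + l - 1 < w.2 ∧ w.2 < -w.1 + l + 1) :
    dist w ((0, 0) : ℝ × ℝ) ≤ w.2 + 1 := by
  have hu := abs_fst_le_of_mem_band (by linarith) hband
  rw [Prod.dist_eq, Real.dist_0_eq_abs, Real.dist_0_eq_abs, abs_of_pos (by linarith : 0 < w.2)]
  exact max_le (by linarith) (by linarith)

lemma sub_fst_le_dist (w z : ℝ × ℝ) : z.1 - w.1 ≤ dist w z :=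
  calc z.1 - w.1 ≤ |w.1 - z.1| := by rw [abs_sub_comm]; exact le_abs_self _
    _ ≤ dist w z := by rw [Prod.dist_eq, Real.dist_eq]; exact le_max_left _ _

lemma dist_zero_add_lt_dist_of_mem_band {C : ℝ} {z : ℝ × ℝ} (hl : 0 < l) (hv : 2 * l < w.2)
    (hband : -w.1 + l - 1 < w.2 ∧ w.2 < -w.1 + l + 1) (hz : l + 2 + C < z.1) :
    dist w ((0, 0) : ℝ × ℝ) + C < dist w z := by
  linarith [dist_zero_le_of_mem_band hl hv hband, sub_fst_le_dist w z, hband.2]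

end Band

theorem sup_separation_northeast_general (l : ℝ) (hl : 0 < l)
    (C : ℝ) (z w : ℕ → ℝ × ℝ)
    (hzx : Filter.Tendsto (fun n => (z n).1) Filter.atTop Filter.atTop)
    (hwv : ∀ n, (w n).2 > 2 * l)
    (hwband : ∀ n, -(w n).1 + l - 1 < (w n).2 ∧ (w n).2 < -(w n).1 + l + 1) :
    ∀ᶠ n in Filter.atTop, dist (w n) (z n) > dist (w n) ((0, 0) : ℝ × ℝ) + C := by
  filter_upwards [hzx.eventually_gt_atTop (l + 2 + C)] with n hx
  exact dist_zero_add_lt_dist_of_mem_band hl (hwv n) (hwband n) hx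

/-- Separation estimate: if `z_n` converges to the horofunction `h^{NE}_m` and `w_n` stays in
the neighborhood `U` of `h^{NW}_ℓ` and leaves all bounded sets, then eventually
`dist (w_n, z_n) > dist (w_n, 0) + C`. -/
theorem sup_separation_northeast (m : ℝ) (hm : 0 ≤ m) (l : ℝ) (hl : 0 < l)
    (C : ℝ) (hC : 0 ≤ C) (z w : ℕ → ℝ × ℝ)
    (hzx : Filter.Tendsto (fun n => (z n).1) Filter.atTop Filter.atTop)
    (hzy : Filter.Tendsto (fun n => (z n).2) Filter.atTop Filter.atTop)
    (hzdiff : Filter.Tendsto (fun n => (z n).2 - (z n).1) Filter.atTop (𝓝 m))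
    (hwv : ∀ n, (w n).2 > 2 * l)
    (hwband : ∀ n, -(w n).1 + l - 1 < (w n).2 ∧ (w n).2 < -(w n).1 + l + 1)
    (hwinf : Filter.Tendsto (fun n => max |(w n).1| |(w n).2|) Filter.atTop Filter.atTop) :
    ∀ᶠ n in Filter.atTop, dist (w n) (z n) > dist (w n) ((0, 0) : ℝ × ℝ) + C :=
  sup_separation_northeast_general l hl C z w hzx hwv hwband
end

section
/- Horofunctions of the sup metric on ℝⁿ: let n ≥ 1, let ε : Fin n → ℝ take values in {−1, 1}, and let m : Fin n → ℝ satisfy m i ≥ 0 for all i and m i₀ = 0 for some index i₀. Define the sequence z_N ∈ (Fin n → ℝ) by z_N(i) = −ε(i)·(N − m(i)) for N ∈ ℕ. Then for every point z ∈ (Fin n → ℝ), the sequence dist(z_N, z) − dist(z_N, 0) converges as N → ∞ to max over i of (ε(i)·z(i) − m(i)). -/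
/-!
Once `N ≥ m i + |z i|` for every `i`, no coordinate difference of `z_N - z` changes sign, so the
`i`-th coordinate contributes exactly `N + (ε i * z i - m i)` to `dist z_N z` and `N - m i` to
`dist z_N 0`. Taking maxima, `dist z_N z - dist z_N 0 = ⨆ i, (ε i * z i - m i) - ⨆ i, -m i`, and
the last supremum vanishes because `m ≥ 0` attains `0`. The sequence is therefore eventually
constant.
-/

open Filter Topology

lemma dist_pi_eq_ciSup {ι : Type*} [Fintype ι] [Nonempty ι] {X : ι → Type*}
    [∀ i, PseudoMetricSpace (X i)] (f g : ∀ i, X i) :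
    dist f g = ⨆ i, dist (f i) (g i) :=
  le_antisymm
    (dist_pi_le_iff'.2 fun i => le_ciSup (Set.finite_range fun i => dist (f i) (g i)).bddAbove i)
    (ciSup_le fun i => dist_le_pi_dist f g i)

lemma Real.dist_neg_mul_eq {ε t w : ℝ} (hε : |ε| = 1) (hw : |w| ≤ t) :
    dist (-ε * t) w = t + ε * w := by
  have hε_sq : ε * ε = 1 := by rw [← abs_mul_abs_self, hε, one_mul]
  have hεw : -|w| ≤ ε * w := by
    simpa only [abs_mul, hε, one_mul] using neg_abs_le (ε * w)
  calc dist (-ε * t) w = |-ε * (t + ε * w)| := by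
        rw [Real.dist_eq]; congr 1; linear_combination w * hε_sq
    _ = t + ε * w := by rw [abs_mul, abs_neg, hε, one_mul, abs_of_nonneg (by linarith)]

theorem sup_horofunction_Rn_general (n : ℕ)
    (ε : Fin n → ℝ) (hε : ∀ i, ε i = -1 ∨ ε i = 1)
    (m : Fin n → ℝ) (hm : ∀ i, 0 ≤ m i) (hm0 : ∃ i₀, m i₀ = 0) :
    ∀ z : Fin n → ℝ,
      Filter.Tendsto
        (fun N : ℕ =>
          dist (fun i => -ε i * ((N : ℝ) - m i)) z
            - dist (fun i => -ε i * ((N : ℝ) - m i)) (0 : Fin n → ℝ))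
        Filter.atTop (𝓝 (⨆ i, (ε i * z i - m i))) := by
  intro z
  obtain ⟨i₀, hi₀⟩ := hm0
  have : Nonempty (Fin n) := ⟨i₀⟩
  have hε_abs : ∀ i, |ε i| = 1 := fun i => by rcases hε i with h | h <;> simp [h]
  have hsup_neg_m : ⨆ i, -m i = 0 :=
    le_antisymm (ciSup_le fun i => neg_nonpos.2 (hm i))
      (le_ciSup_of_le (Set.finite_range _).bddAbove i₀ (by rw [hi₀, neg_zero]))
  refine tendsto_const_nhds.congr' ?_
  filter_upwards [eventually_all.2 fun i =>
    tendsto_natCast_atTop_atTop.eventually_ge_atTop (m i + |z i|)] with N hN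
  have hz : ∀ i, |z i| ≤ N - m i := fun i => by linarith [hN i]
  have hdist_z : ∀ i, dist (-ε i * (N - m i)) (z i) = N + (ε i * z i - m i) := fun i => by
    rw [Real.dist_neg_mul_eq (hε_abs i) (hz i)]; ring
  have hdist_0 : ∀ i, dist (-ε i * (N - m i)) 0 = N + -m i := fun i => by
    rw [Real.dist_neg_mul_eq (hε_abs i) (abs_zero.trans_le ((abs_nonneg _).trans (hz i)))]; ring
  rw [dist_pi_eq_ciSup, dist_pi_eq_ciSup]
  simp only [Pi.zero_apply, hdist_z, hdist_0]
  rw [← add_ciSup (Set.finite_range _).bddAbove, ← add_ciSup (Set.finite_range _).bddAbove,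
    hsup_neg_m]
  ring

/-- Horofunctions of the sup metric on `ℝⁿ`: for signs `ε i ∈ {-1, 1}` and offsets `m i ≥ 0`
with `m i₀ = 0` for some `i₀`, the sequence `z_N (i) = -ε i * (N - m i)` converges to the
horofunction `z ↦ ⨆ i, (ε i * z i - m i)`. -/
theorem sup_horofunction_Rn (n : ℕ) (hn : 1 ≤ n)
    (ε : Fin n → ℝ) (hε : ∀ i, ε i = -1 ∨ ε i = 1)
    (m : Fin n → ℝ) (hm : ∀ i, 0 ≤ m i) (hm0 : ∃ i₀, m i₀ = 0) :
    ∀ z : Fin n → ℝ,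
      Filter.Tendsto
        (fun N : ℕ =>
          dist (fun i => -ε i * ((N : ℝ) - m i)) z
            - dist (fun i => -ε i * ((N : ℝ) - m i)) (0 : Fin n → ℝ))
        Filter.atTop (𝓝 (⨆ i, (ε i * z i - m i))) :=
  sup_horofunction_Rn_general n ε hε m hm hm0
end

section
/- Equidistant locus in the sup metric on ℝ²: let b > 0 and p = (b, 0). The set of points of ℝ × ℝ (with the sup metric) that are equidistant from the origin and from p is exactly the union of the vertical segment {(x,y) : x = b/2 and |y| ≤ b/2} with the two cones {(x,y) : |y| ≥ max(|x|, |x − b|)}. That is, dist(z, (0,0)) = dist(z, p) if and only if (z.1 = b/2 and |z.2| ≤ b/2) or |z.2| ≥ max(|z.1|, |z.1 − b|). -/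
/-! Since `dist z q = max |z.1 - q.1| |z.2 - q.2|` and both points lie on the `x`-axis, the two
distances share the term `|z.2|`. Two maxima `max a c` and `max a' c` agree exactly when `a = a'`
or `c` dominates both; here `a = a'` reads `|z.1| = |z.1 - b|`, i.e. `z.1 = b / 2`, and on that
line the cone condition is `|z.2| ≥ b / 2`, which splits the line into the segment and the cones. -/

theorem max_eq_max_right_iff {α : Type*} [LinearOrder α] {a a' c : α} :
    max a c = max a' c ↔ a = a' ∨ max a a' ≤ c := by
  refine ⟨fun h ↦ ?_, ?_⟩
  · rcases le_total a c with hac | hac <;> rcases le_total a' c with hac' | hac' <;>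
      simp only [max_eq_left, max_eq_right, hac, hac'] at h
    · exact Or.inr (max_le hac hac')
    · exact Or.inr (max_le hac h.ge)
    · exact Or.inr (max_le h.le hac')
    · exact Or.inl h
  · rintro (rfl | hc)
    · rfl
    · rw [max_eq_right (le_of_max_le_left hc), max_eq_right (le_of_max_le_right hc)]

theorem abs_eq_abs_sub_iff {K : Type*} [Field K] [LinearOrder K] [IsStrictOrderedRing K]
    {x b : K} (hb : b ≠ 0) : |x| = |x - b| ↔ x = b / 2 := by
  rw [abs_eq_abs]
  constructor
  · rintro (h | h)
    · exact absurd (by linarith) hb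
    · linarith
  · rintro rfl
    exact Or.inr (by ring)

/-- Equidistant locus in `(ℝ², sup)`: for `b > 0` and `p = (b, 0)`, a point is equidistant
from the origin and `p` iff it lies on the vertical segment `{x = b/2, |y| ≤ b/2}` or in the
cones `{|y| ≥ max |x| |x - b|}`. -/
theorem sup_equidistant_locus (b : ℝ) (hb : 0 < b) :
    ∀ z : ℝ × ℝ,
      dist z ((0, 0) : ℝ × ℝ) = dist z ((b, 0) : ℝ × ℝ) ↔
        (z.1 = b / 2 ∧ |z.2| ≤ b / 2) ∨ |z.2| ≥ max |z.1| |z.1 - b| := by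
  rintro ⟨x, y⟩
  simp only [Prod.dist_eq, Real.dist_eq, sub_zero]
  rw [max_eq_max_right_iff, abs_eq_abs_sub_iff hb.ne', ge_iff_le]
  constructor
  · rintro (rfl | hcone)
    · rcases le_or_gt |y| (b / 2) with hy | hy
      · exact Or.inl ⟨rfl, hy⟩
      · have hmax : max |b / 2| |b / 2 - b| = b / 2 := by
          rw [← (abs_eq_abs_sub_iff hb.ne').mpr rfl, max_self, abs_of_pos (half_pos hb)]
        exact Or.inr (by rw [hmax]; exact hy.le)
    · exact Or.inr hcone
  · rintro (⟨hx, -⟩ | hcone)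
    · exact Or.inl hx
    · exact Or.inr hcone
end
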